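/- arXiv:1612.02088 — 6 statements merged into one kernel-verified Lean document; each statement's English description precedes it below -/
import Mathlib

section
/- Consider a finite-horizon MDP with zero running rewards and a terminal reward g : S → ℝ, and define u_N := g and u_t(x) := max_{a ∈ A} Σ_{y∈S} p x a y · u_{t+1}(y) for t = N-1, …, 0. Then there exists a single deterministic Markov policy π* (obtained by choosing, at each time t and state x, an action attaining the maximum in the definition of u_t(x)) such that for every initial state x ∈ S simultaneously, Σ_{ω : ω 0 = x} (∏_{t=0}^{N-1} p (ω t) (π* t (ω t)) (ω (t+1))) · g(ω N) = u_0(x); in particular the maximum over deterministic Markov policies of the expected terminal reward is attained by π* at every initial state. -/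
/-- Backward-induction value functions for a finite-horizon MDP with zero running
rewards and terminal reward `g`, indexed by the number of remaining steps:
`valIter p g 0 = g` and `valIter p g (k+1) x = max_{a} ∑ y, p x a y * valIter p g k y`.
Thus `u_t = valIter p g (N - t)`, and in particular `u_0 = valIter p g N`. -/
noncomputable def valIter {S A : Type} [Fintype S] [Fintype A] [Nonempty A]
    (p : S → A → S → ℝ) (g : S → ℝ) : ℕ → S → ℝ
  | 0 => g
  | k + 1 => fun x =>
      Finset.univ.sup' Finset.univ_nonempty (fun a : A => ∑ y, p x a y * valIter p g k y)

/-- Value of a policy by backward recursion. -/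
noncomputable def polVal {S A : Type} [Fintype S]
    (p : S → A → S → ℝ) (g : S → ℝ) : (N : ℕ) → (Fin N → S → A) → S → ℝ
  | 0, _, x => g x
  | N + 1, π, x => ∑ y, p x (π 0 x) y * polVal p g N (fun t => π t.succ) y

lemma sum_filter_head {S : Type} [Fintype S] [DecidableEq S] (N : ℕ) (x : S)
    (F : (Fin (N + 1) → S) → ℝ) :
    ∑ ω ∈ Finset.univ.filter (fun ω : Fin (N + 1) → S => ω 0 = x), F ω
      = ∑ τ : Fin N → S, F (Fin.cons x τ) := by
  refine Finset.sum_bij' (fun ω _ => Fin.tail ω) (fun τ _ => Fin.cons x τ) ?_ ?_ ?_ ?_ ?_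
  · intro ω hω; simp
  · intro τ _; simp [Fin.cons_zero]
  · intro ω hω
    simp only [Finset.mem_filter] at hω
    obtain ⟨-, hx⟩ := hω
    subst hx
    exact Fin.cons_self_tail ω
  · intro τ _; simp [Fin.tail_cons]
  · intro ω hω
    simp only [Finset.mem_filter] at hω
    obtain ⟨-, hx⟩ := hω
    subst hx
    rw [Fin.cons_self_tail ω]

lemma pathSum_eq_polVal {S A : Type} [Fintype S] [Fintype A] [DecidableEq S]
    (p : S → A → S → ℝ) (g : S → ℝ) :
    ∀ (N : ℕ) (π : Fin N → S → A) (x : S),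
    (∑ ω ∈ Finset.univ.filter (fun ω : Fin (N + 1) → S => ω 0 = x),
        (∏ t : Fin N, p (ω t.castSucc) (π t (ω t.castSucc)) (ω t.succ)) *
          g (ω (Fin.last N)))
      = polVal p g N π x := by
  intro N
  induction N with
  | zero =>
    intro π x
    rw [sum_filter_head]
    simp [polVal]
  | succ N ih =>
    intro π x
    rw [sum_filter_head]
    have key : ∀ τ : Fin (N + 1) → S,
        (∏ t : Fin (N + 1), p ((Fin.cons x τ : Fin (N+2) → S) t.castSucc)
            (π t ((Fin.cons x τ : Fin (N+2) → S) t.castSucc))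
            ((Fin.cons x τ : Fin (N+2) → S) t.succ)) *
          g ((Fin.cons x τ : Fin (N+2) → S) (Fin.last (N + 1)))
        = p x (π 0 x) (τ 0) *
          ((∏ t : Fin N, p (τ t.castSucc) (π t.succ (τ t.castSucc)) (τ t.succ)) *
            g (τ (Fin.last N))) := by
      intro τ
      have hprod :
          (∏ t : Fin N, p ((Fin.cons x τ : Fin (N+2) → S) t.succ.castSucc)
              (π t.succ ((Fin.cons x τ : Fin (N+2) → S) t.succ.castSucc))
              ((Fin.cons x τ : Fin (N+2) → S) t.succ.succ))
          = ∏ t : Fin N, p (τ t.castSucc) (π t.succ (τ t.castSucc)) (τ t.succ) := by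
        refine Finset.prod_congr rfl fun t _ => ?_
        simp [← Fin.succ_castSucc, Fin.cons_succ]
      rw [Fin.prod_univ_succ, hprod, ← Fin.succ_last, Fin.cons_succ]
      have h0 : ((0 : Fin (N+1)).castSucc : Fin (N+2)) = 0 := rfl
      rw [h0, Fin.cons_zero, Fin.cons_succ]
      ring
    rw [Finset.sum_congr rfl (fun τ _ => key τ)]
    have hfib :
        (∑ τ : Fin (N+1) → S, p x (π 0 x) (τ 0) *
            ((∏ t : Fin N, p (τ t.castSucc) (π t.succ (τ t.castSucc)) (τ t.succ)) *
              g (τ (Fin.last N))))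
        = ∑ y : S, ∑ τ ∈ Finset.univ.filter (fun τ : Fin (N+1) → S => τ 0 = y),
            p x (π 0 x) (τ 0) *
            ((∏ t : Fin N, p (τ t.castSucc) (π t.succ (τ t.castSucc)) (τ t.succ)) *
              g (τ (Fin.last N))) :=
      (Finset.sum_fiberwise_of_maps_to (fun τ _ => Finset.mem_univ (τ 0)) _).symm
    rw [hfib]
    show _ = polVal p g (N+1) π x
    simp only [polVal]
    refine Finset.sum_congr rfl fun y _ => ?_
    rw [← ih (fun t => π t.succ) y, Finset.mul_sum]
    refine Finset.sum_congr rfl fun τ hτ => ?_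
    simp only [Finset.mem_filter] at hτ
    rw [hτ.2]

lemma polVal_le_valIter {S A : Type} [Fintype S] [Fintype A] [Nonempty A]
    (p : S → A → S → ℝ) (hp0 : ∀ x a y, 0 ≤ p x a y) (g : S → ℝ) :
    ∀ (N : ℕ) (π : Fin N → S → A) (x : S), polVal p g N π x ≤ valIter p g N x := by
  intro N
  induction N with
  | zero => intro π x; simp [polVal, valIter]
  | succ N ih =>
    intro π x
    have h1 : polVal p g (N+1) π x ≤ ∑ y, p x (π 0 x) y * valIter p g N y := by
      simp only [polVal]
      exact Finset.sum_le_sum fun y _ =>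
        mul_le_mul_of_nonneg_left (ih _ y) (hp0 x _ y)
    exact h1.trans (Finset.le_sup' (fun a : A => ∑ y, p x a y * valIter p g N y)
      (Finset.mem_univ (π 0 x)))

/-- There is a single deterministic Markov policy `π*` whose expected terminal reward
equals `u_0(x)` for every initial state `x` simultaneously; in particular `π*` attains
the maximum over deterministic Markov policies of the expected terminal reward at every
initial state. -/
theorem exists_policy_attaining_valIter
    {S A : Type} [Fintype S] [Fintype A] [Nonempty S] [Nonempty A] [DecidableEq S]
    (N : ℕ) (hN : 1 ≤ N)
    (p : S → A → S → ℝ)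
    (hp0 : ∀ x a y, 0 ≤ p x a y)
    (hp1 : ∀ x a, ∑ y, p x a y = 1)
    (g : S → ℝ) :
    ∃ πstar : Fin N → S → A,
      (∀ x : S,
        (∑ ω ∈ Finset.univ.filter (fun ω : Fin (N + 1) → S => ω 0 = x),
            (∏ t : Fin N, p (ω t.castSucc) (πstar t (ω t.castSucc)) (ω t.succ)) *
              g (ω (Fin.last N)))
          = valIter p g N x) ∧
      (∀ x : S, ∀ π : Fin N → S → A,
        (∑ ω ∈ Finset.univ.filter (fun ω : Fin (N + 1) → S => ω 0 = x),
            (∏ t : Fin N, p (ω t.castSucc) (π t (ω t.castSucc)) (ω t.succ)) *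
              g (ω (Fin.last N)))
          ≤ ∑ ω ∈ Finset.univ.filter (fun ω : Fin (N + 1) → S => ω 0 = x),
              (∏ t : Fin N, p (ω t.castSucc) (πstar t (ω t.castSucc)) (ω t.succ)) *
                g (ω (Fin.last N))) := by
  have hact : ∀ (k : ℕ) (x : S), ∃ a : A,
      ∑ y, p x a y * valIter p g k y = valIter p g (k + 1) x := by
    intro k x
    obtain ⟨a, -, ha⟩ := Finset.exists_mem_eq_sup' (Finset.univ_nonempty (α := A))
      (fun a : A => ∑ y, p x a y * valIter p g k y)
    exact ⟨a, ha.symm⟩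
  choose act hactspec using hact
  have main : ∀ (M : ℕ) (x : S),
      polVal p g M (fun (t : Fin M) x => act (M - 1 - (t : ℕ)) x) x = valIter p g M x := by
    intro M
    induction M with
    | zero => intro x; simp [polVal, valIter]
    | succ M ih =>
      intro x
      simp only [polVal]
      have htail : (fun (t : Fin M) =>
            (fun x => act (M + 1 - 1 - (((t.succ : Fin (M+1)) : ℕ))) x))
          = fun (t : Fin M) x => act (M - 1 - (t : ℕ)) x := by
        funext t x
        congr 1
        simp only [Fin.val_succ]
        omega
      have h0 : (M + 1 - 1 - (((0 : Fin (M+1)) : ℕ))) = M := by simp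
      rw [htail, h0]
      rw [Finset.sum_congr rfl (fun y _ => by rw [ih y])]
      exact hactspec M x
  refine ⟨fun t x => act (N - 1 - (t : ℕ)) x, fun x => ?_, fun x π => ?_⟩
  · rw [pathSum_eq_polVal]; exact main N x
  · rw [pathSum_eq_polVal, pathSum_eq_polVal, main N x]
    exact polVal_le_valIter p hp0 g N π x
end

section
/- (Correctness of the state-transition transformation.) Let ⟨N, S, p, r, μ0⟩ be a finite-horizon Markov reward process with N ≥ 1 and let ⟨N−1, S × S, p†, r†, μ0†⟩ be its state-transition transformation. Then for every function f : ℝ → ℝ, Σ_{ω : Fin(N+1)→S} μ0(ω 0) · (∏_{t=0}^{N-1} p (ω t) (ω (t+1))) · f( Σ_{t=0}^{N-1} r (ω t) (ω (t+1)) ) = Σ_{ω† : Fin N → S×S} μ0†(ω† 0) · (∏_{t=0}^{N-2} p† (ω† t) (ω† (t+1))) · f( Σ_{t=0}^{N-1} r† (ω† t) ); that is, the distribution of the total reward of the transformed process coincides with the distribution of the total reward of the original process. -/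
/-!
A path `ω` of the original process is determined by its sequence of edges
`t ↦ (ω t, ω (t + 1))`, and the sequences of pairs arising this way are exactly those in which
consecutive pairs share their middle state. The lifted kernel `p†` vanishes on every other
sequence of pairs and agrees with `p` on edge sequences, so summing over pairs is the same as
summing over edge sequences of paths, and both the weights and the total rewards match term by
term.
-/

open Finset Function

section EdgePath

variable {α : Type*} {n : ℕ}

def edgePath (ω : Fin (n + 2) → α) : Fin (n + 1) → α × α :=
  fun t => (ω t.castSucc, ω t.succ)

def IsEdgePath (ω' : Fin (n + 1) → α × α) : Prop :=
  ∀ t : Fin n, (ω' t.succ).1 = (ω' t.castSucc).2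

theorem edgePath_injective : Injective (edgePath : (Fin (n + 2) → α) → Fin (n + 1) → α × α) := by
  intro ω₁ ω₂ h
  funext i
  rcases Fin.eq_castSucc_or_eq_last i with ⟨j, rfl⟩ | rfl
  · exact congr_arg Prod.fst (congr_fun h j)
  · simpa [edgePath, Fin.succ_last] using congr_arg Prod.snd (congr_fun h (Fin.last n))

theorem isEdgePath_edgePath (ω : Fin (n + 2) → α) : IsEdgePath (edgePath ω) := fun t => by
  simp only [edgePath, Fin.succ_castSucc]

theorem IsEdgePath.exists_edgePath_eq {ω' : Fin (n + 1) → α × α} (h : IsEdgePath ω') :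
    ∃ ω, edgePath ω = ω' := by
  refine ⟨Fin.cons (ω' 0).1 fun t => (ω' t).2, funext fun t => Prod.ext ?_ (by simp [edgePath])⟩
  induction t using Fin.cases with
  | zero => rfl
  | succ s => simp [edgePath, h s]

theorem mem_range_edgePath_iff {ω' : Fin (n + 1) → α × α} :
    ω' ∈ Set.range edgePath ↔ IsEdgePath ω' := by
  refine ⟨?_, IsEdgePath.exists_edgePath_eq⟩
  rintro ⟨ω, rfl⟩
  exact isEdgePath_edgePath ω

end EdgePath

section LiftKernel

variable {α R : Type*} [DecidableEq α] [CommMonoidWithZero R] {n : ℕ}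

/-- The kernel `p†` of the state-transition transformation. -/
def liftKernel (g : α → α → R) (u v : α × α) : R :=
  if v.1 = u.2 then g u.2 v.2 else 0

theorem prod_liftKernel_eq_zero_of_not_isEdgePath (g : α → α → R)
    {ω' : Fin (n + 1) → α × α} (h : ¬ IsEdgePath ω') :
    ∏ t : Fin n, liftKernel g (ω' t.castSucc) (ω' t.succ) = 0 := by
  obtain ⟨t, ht⟩ := not_forall.mp h
  exact prod_eq_zero (mem_univ t) (if_neg ht)

theorem prod_liftKernel_edgePath (g : α → α → R) (ω : Fin (n + 2) → α) :
    ∏ t : Fin n, liftKernel g (edgePath ω t.castSucc) (edgePath ω t.succ) =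
      ∏ t : Fin n, g (ω t.succ.castSucc) (ω t.succ.succ) :=
  prod_congr rfl fun t _ => by
    rw [liftKernel, if_pos (isEdgePath_edgePath ω t), edgePath, edgePath, Fin.succ_castSucc]

end LiftKernel

theorem stateTransitionTransformation_totalReward_distribution_eq_general
    {S : Type} [Fintype S] [DecidableEq S]
    (M : ℕ)
    (p : S → S → ℝ)
    (r : S → S → ℝ)
    (μ0 : S → ℝ)
    (f : ℝ → ℝ) :
    (∑ ω : Fin (M + 2) → S,
        μ0 (ω 0) * (∏ t : Fin (M + 1), p (ω t.castSucc) (ω t.succ)) *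
          f (∑ t : Fin (M + 1), r (ω t.castSucc) (ω t.succ)))
    = ∑ ω' : Fin (M + 1) → S × S,
        (μ0 (ω' 0).1 * p (ω' 0).1 (ω' 0).2) *
          (∏ t : Fin M,
            (if (ω' t.succ).1 = (ω' t.castSucc).2
              then p (ω' t.castSucc).2 (ω' t.succ).2 else 0)) *
          f (∑ t : Fin (M + 1), r (ω' t).1 (ω' t).2) := by
  refine Fintype.sum_of_injective edgePath edgePath_injective _ _ (fun ω' hω' => ?_) fun ω => ?_
  · have hzero := prod_liftKernel_eq_zero_of_not_isEdgePath p (mt mem_range_edgePath_iff.mpr hω')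
    simp only [liftKernel] at hzero
    rw [hzero, mul_zero, zero_mul]
  · have hprod := prod_liftKernel_edgePath p ω
    simp only [liftKernel] at hprod
    rw [Fin.prod_univ_succ, hprod]
    simp only [edgePath, Fin.castSucc_zero]
    ring

/-- Correctness of the state-transition transformation: for a finite-horizon Markov
reward process with horizon `N = M + 1 ≥ 1`, and its transformed process with horizon
`M = N − 1`, state space `S × S`, reward `r†(x,y) = r x y`, kernel
`p† (w,x) (x',y) = if x' = x then p x y else 0`, and initial distribution
`μ0†(x,y) = μ0 x * p x y`, the expectation of `f` applied to the total reward is the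
same for both processes, for every `f : ℝ → ℝ`; i.e. the total-reward distributions
coincide. -/
theorem stateTransitionTransformation_totalReward_distribution_eq
    {S : Type} [Fintype S] [Nonempty S] [DecidableEq S]
    (M : ℕ)
    (p : S → S → ℝ) (hp0 : ∀ x y, 0 ≤ p x y) (hp1 : ∀ x, ∑ y, p x y = 1)
    (r : S → S → ℝ)
    (μ0 : S → ℝ) (hμ0 : ∀ x, 0 ≤ μ0 x) (hμ1 : ∑ x, μ0 x = 1)
    (f : ℝ → ℝ) :
    (∑ ω : Fin (M + 2) → S,
        μ0 (ω 0) * (∏ t : Fin (M + 1), p (ω t.castSucc) (ω t.succ)) *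
          f (∑ t : Fin (M + 1), r (ω t.castSucc) (ω t.succ)))
    = ∑ ω' : Fin (M + 1) → S × S,
        (μ0 (ω' 0).1 * p (ω' 0).1 (ω' 0).2) *
          (∏ t : Fin M,
            (if (ω' t.succ).1 = (ω' t.castSucc).2
              then p (ω' t.castSucc).2 (ω' t.succ).2 else 0)) *
          f (∑ t : Fin (M + 1), r (ω' t).1 (ω' t).2) :=
  stateTransitionTransformation_totalReward_distribution_eq_general M p r μ0 f
end

section
/- Let ⟨N, S, p, r, μ0⟩ be a finite-horizon Markov reward process with N ≥ 1 and let ⟨N−1, S × S, p†, r†, μ0†⟩ be its state-transition transformation. Then for every c ∈ ℝ, the total-reward cumulative distribution functions agree: Σ_{ω : Σ_{t<N} r (ω t) (ω (t+1)) ≤ c} μ0(ω 0) · ∏_{t=0}^{N-1} p (ω t) (ω (t+1)) = Σ_{ω† : Σ_{t<N} r† (ω† t) ≤ c} μ0†(ω† 0) · ∏_{t=0}^{N-2} p† (ω† t) (ω† (t+1)), where ω ranges over Fin (N+1) → S and ω† over Fin N → S × S. -/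
/-!
A path `ω` of the process is sent to the path of its transitions `t ↦ (ω t, ω (t+1))`. This
map is injective, it preserves the total reward and the path probability, and its image is
exactly the set of pair paths whose consecutive pairs are chained, `(ω' (t+1)).1 = (ω' t).2`.
The transformed kernel vanishes on every non-chained step, so the transformed path probability
is zero off the image, and the two cumulative distribution functions are the same finite sum.
-/

namespace MarkovRewardProcess

open Function

variable {S : Type*}

def pathWeight {n : ℕ} (μ : S → ℝ) (p : S → S → ℝ) (ω : Fin (n + 1) → S) : ℝ :=
  μ (ω 0) * ∏ t : Fin n, p (ω t.castSucc) (ω t.succ)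

def transitionPath {n : ℕ} (ω : Fin (n + 1) → S) : Fin n → S × S :=
  fun t => (ω t.castSucc, ω t.succ)

-- `μ0†` and `p†` of the state-transition transformation.
def pairInitial (μ : S → ℝ) (p : S → S → ℝ) (a : S × S) : ℝ :=
  μ a.1 * p a.1 a.2

def pairKernel [DecidableEq S] (p : S → S → ℝ) (a b : S × S) : ℝ :=
  if b.1 = a.2 then p a.2 b.2 else 0

theorem transitionPath_injective {n : ℕ} :
    Injective (transitionPath : (Fin (n + 2) → S) → Fin (n + 1) → S × S) := by
  intro ω ω' h
  funext k
  rcases Fin.eq_castSucc_or_eq_last k with ⟨t, rfl⟩ | rfl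
  · exact congrArg Prod.fst (congrFun h t)
  · simpa [transitionPath] using congrArg Prod.snd (congrFun h (Fin.last n))

theorem mem_range_transitionPath {n : ℕ} {ω' : Fin (n + 1) → S × S}
    (hchain : ∀ t : Fin n, (ω' t.succ).1 = (ω' t.castSucc).2) :
    ω' ∈ Set.range transitionPath := by
  refine ⟨Fin.cons (ω' 0).1 fun i => (ω' i).2, funext fun t => ?_⟩
  induction t using Fin.cases with
  | zero => rfl
  | succ t => simp [transitionPath, Prod.ext_iff, hchain t]

theorem pathWeight_pairKernel_eq_zero [DecidableEq S] {n : ℕ} (μ : S → ℝ) (p : S → S → ℝ)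
    {ω' : Fin (n + 1) → S × S} (hω' : ω' ∉ Set.range transitionPath) :
    pathWeight (pairInitial μ p) (pairKernel p) ω' = 0 := by
  obtain ⟨t, ht⟩ : ∃ t : Fin n, (ω' t.succ).1 ≠ (ω' t.castSucc).2 := by
    by_contra! hchain
    exact hω' (mem_range_transitionPath hchain)
  exact mul_eq_zero_of_right _ (Finset.prod_eq_zero (Finset.mem_univ t) (if_neg ht))

theorem pathWeight_transitionPath [DecidableEq S] {n : ℕ} (μ : S → ℝ) (p : S → S → ℝ)
    (ω : Fin (n + 2) → S) :
    pathWeight (pairInitial μ p) (pairKernel p) (transitionPath ω) = pathWeight μ p ω := by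
  simp [pathWeight, pairInitial, pairKernel, transitionPath, Fin.prod_univ_succ (n := n),
    mul_assoc]

end MarkovRewardProcess

open MarkovRewardProcess

open Classical in
theorem stateTransitionTransformation_cdf_eq_general
    {S : Type} [Fintype S] [DecidableEq S]
    (M : ℕ)
    (p : S → S → ℝ)
    (r : S → S → ℝ)
    (μ0 : S → ℝ)
    (c : ℝ) :
    (∑ ω : Fin (M + 2) → S,
        if (∑ t : Fin (M + 1), r (ω t.castSucc) (ω t.succ)) ≤ c then
          μ0 (ω 0) * ∏ t : Fin (M + 1), p (ω t.castSucc) (ω t.succ)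
        else 0)
    = ∑ ω' : Fin (M + 1) → S × S,
        if (∑ t : Fin (M + 1), r (ω' t).1 (ω' t).2) ≤ c then
          (μ0 (ω' 0).1 * p (ω' 0).1 (ω' 0).2) *
            ∏ t : Fin M,
              (if (ω' t.succ).1 = (ω' t.castSucc).2
                then p (ω' t.castSucc).2 (ω' t.succ).2 else 0)
        else 0 := by
  refine Fintype.sum_of_injective transitionPath transitionPath_injective _
    (fun ω' => if (∑ t, r (ω' t).1 (ω' t).2) ≤ c then
      pathWeight (pairInitial μ0 p) (pairKernel p) ω' else 0) ?_ ?_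
  · intro ω' hω'
    simp only [pathWeight_pairKernel_eq_zero μ0 p hω', ite_self]
  · intro ω
    rw [pathWeight_transitionPath]
    rfl

open Classical in
/-- The total-reward cumulative distribution functions of a finite-horizon Markov
reward process (horizon `N = M + 1 ≥ 1`) and of its state-transition transformation
(horizon `M`, state space `S × S`, reward `r†(x,y) = r x y`, kernel
`p† (w,x) (x',y) = if x' = x then p x y else 0`, initial distribution
`μ0†(x,y) = μ0 x * p x y`) agree at every level `c ∈ ℝ`. -/
theorem stateTransitionTransformation_cdf_eq
    {S : Type} [Fintype S] [Nonempty S] [DecidableEq S]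
    (M : ℕ)
    (p : S → S → ℝ) (hp0 : ∀ x y, 0 ≤ p x y) (hp1 : ∀ x, ∑ y, p x y = 1)
    (r : S → S → ℝ)
    (μ0 : S → ℝ) (hμ0 : ∀ x, 0 ≤ μ0 x) (hμ1 : ∑ x, μ0 x = 1)
    (c : ℝ) :
    (∑ ω : Fin (M + 2) → S,
        if (∑ t : Fin (M + 1), r (ω t.castSucc) (ω t.succ)) ≤ c then
          μ0 (ω 0) * ∏ t : Fin (M + 1), p (ω t.castSucc) (ω t.succ)
        else 0)
    = ∑ ω' : Fin (M + 1) → S × S,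
        if (∑ t : Fin (M + 1), r (ω' t).1 (ω' t).2) ≤ c then
          (μ0 (ω' 0).1 * p (ω' 0).1 (ω' 0).2) *
            ∏ t : Fin M,
              (if (ω' t.succ).1 = (ω' t.castSucc).2
                then p (ω' t.castSucc).2 (ω' t.succ).2 else 0)
        else 0 :=
  stateTransitionTransformation_cdf_eq_general M p r μ0 c
end

section
/- Let ⟨N, S, p, r, μ0⟩ be a finite-horizon Markov reward process with N ≥ 1 and let ⟨N−1, S × S, p†, r†, μ0†⟩ be its state-transition transformation. Then for every time t with 0 ≤ t ≤ N−1 and every pair (x,y) ∈ S × S, the marginal law of the transformed process at time t equals the law of the transition pair of the original process: Σ_{ω† : Fin N → S×S, ω† t = (x,y)} μ0†(ω† 0) · ∏_{s=0}^{N-2} p† (ω† s) (ω† (s+1)) = Σ_{ω : Fin(N+1)→S, ω t = x ∧ ω (t+1) = y} μ0(ω 0) · ∏_{s=0}^{N-1} p (ω s) (ω (s+1)). -/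
/-!
The transformed process is the original one observed through its consecutive transitions:
the path `ω` of the original chain corresponds to the pair path `s ↦ (ω s, ω (s + 1))`, and
this correspondence is injective, preserves path weights, and hits every pair path of
nonzero weight, since the indicator in `p†` kills every pair path whose consecutive pairs do
not chain up. Summing the weights over paths through a given transition gives the claim.
-/

open Finset

section TransitionPairs

variable {S : Type*}

def pathWeight {n : ℕ} (μ : S → ℝ) (p : S → S → ℝ) (ω : Fin (n + 1) → S) : ℝ :=
  μ (ω 0) * ∏ s : Fin n, p (ω s.castSucc) (ω s.succ)

/-- The kernel `p†` of the state-transition transformation. -/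
def pairKernel [DecidableEq S] (p : S → S → ℝ) (a b : S × S) : ℝ :=
  if b.1 = a.2 then p a.2 b.2 else 0

/-- The initial law `μ0†` of the state-transition transformation. -/
def pairInit (μ : S → ℝ) (p : S → S → ℝ) (a : S × S) : ℝ :=
  μ a.1 * p a.1 a.2

def transitionPairs {n : ℕ} (ω : Fin (n + 1) → S) : Fin n → S × S :=
  fun s => (ω s.castSucc, ω s.succ)

theorem transitionPairs_injective {n : ℕ} :
    Function.Injective (transitionPairs : (Fin (n + 2) → S) → Fin (n + 1) → S × S) := by
  intro ω ω' h
  funext i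
  cases i using Fin.cases with
  | zero => exact congrArg (fun π => (π 0).1) h
  | succ k => exact congrArg (fun π => (π k).2) h

theorem mem_range_transitionPairs {n : ℕ} (π : Fin (n + 1) → S × S)
    (hπ : ∀ s : Fin n, (π s.succ).1 = (π s.castSucc).2) :
    π ∈ Set.range transitionPairs := by
  refine ⟨Fin.cons (π 0).1 fun s => (π s).2, funext fun s => ?_⟩
  cases s using Fin.cases with
  | zero => rfl
  | succ k =>
    simp only [transitionPairs, ← Fin.succ_castSucc, Fin.cons_succ, ← hπ k]

variable [DecidableEq S] (μ : S → ℝ) (p : S → S → ℝ)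

theorem pathWeight_pairKernel_eq_zero {n : ℕ} (π : Fin (n + 1) → S × S)
    (hπ : ∃ s : Fin n, (π s.succ).1 ≠ (π s.castSucc).2) :
    pathWeight (pairInit μ p) (pairKernel p) π = 0 := by
  obtain ⟨s, hs⟩ := hπ
  exact mul_eq_zero_of_right _ <| prod_eq_zero (mem_univ s) (if_neg hs)

theorem pathWeight_pairKernel_transitionPairs {n : ℕ} (ω : Fin (n + 2) → S) :
    pathWeight (pairInit μ p) (pairKernel p) (transitionPairs ω) = pathWeight μ p ω := by
  simp only [pathWeight, pairInit, pairKernel, transitionPairs, Fin.prod_univ_succ (n := n),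
    Fin.succ_castSucc, if_true]
  exact mul_assoc _ _ _

theorem sum_filter_pathWeight_pairKernel {n : ℕ} [Fintype S]
    (P : (Fin (n + 1) → S × S) → Prop) [DecidablePred P] :
    ∑ π ∈ univ.filter P, pathWeight (pairInit μ p) (pairKernel p) π
      = ∑ ω ∈ univ.filter (fun ω => P (transitionPairs ω)), pathWeight μ p ω := by
  refine (sum_of_injOn transitionPairs transitionPairs_injective.injOn
    (fun ω hω => by simpa using hω) (fun π hP hπ => ?_)
    (fun ω _ => (pathWeight_pairKernel_transitionPairs μ p ω).symm)).symm
  apply pathWeight_pairKernel_eq_zero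
  by_contra! hchain
  obtain ⟨ω, rfl⟩ := mem_range_transitionPairs π hchain
  exact hπ ⟨ω, by simpa using hP, rfl⟩

end TransitionPairs

theorem stateTransitionTransformation_marginal_eq_general
    {S : Type} [Fintype S] [DecidableEq S]
    (M : ℕ)
    (p : S → S → ℝ)
    (μ0 : S → ℝ)
    (t : Fin (M + 1)) (x y : S) :
    (∑ ω' ∈ Finset.univ.filter (fun ω' : Fin (M + 1) → S × S => ω' t = (x, y)),
        (μ0 (ω' 0).1 * p (ω' 0).1 (ω' 0).2) *
          ∏ s : Fin M,
            (if (ω' s.succ).1 = (ω' s.castSucc).2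
              then p (ω' s.castSucc).2 (ω' s.succ).2 else 0))
    = ∑ ω ∈ Finset.univ.filter
          (fun ω : Fin (M + 2) → S => ω t.castSucc = x ∧ ω t.succ = y),
        μ0 (ω 0) * ∏ s : Fin (M + 1), p (ω s.castSucc) (ω s.succ) := by
  refine (sum_filter_pathWeight_pairKernel μ0 p (fun π => π t = (x, y))).trans ?_
  simp only [transitionPairs, Prod.mk.injEq, pathWeight]

/-- Marginal laws under the state-transition transformation: for a finite-horizon
Markov reward process with horizon `N = M + 1 ≥ 1` and its transformed process
(horizon `M`, state space `S × S`, kernel `p† (w,x) (x',y) = if x' = x then p x y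
else 0`, initial distribution `μ0†(x,y) = μ0 x * p x y`), for every time
`t ∈ {0, …, N−1}` and every pair `(x,y)`, the probability that the transformed process
is in state `(x,y)` at time `t` equals the probability that the original process makes
the transition from `x` to `y` between times `t` and `t+1`. -/
theorem stateTransitionTransformation_marginal_eq
    {S : Type} [Fintype S] [Nonempty S] [DecidableEq S]
    (M : ℕ)
    (p : S → S → ℝ) (hp0 : ∀ x y, 0 ≤ p x y) (hp1 : ∀ x, ∑ y, p x y = 1)
    (r : S → S → ℝ)
    (μ0 : S → ℝ) (hμ0 : ∀ x, 0 ≤ μ0 x) (hμ1 : ∑ x, μ0 x = 1)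
    (t : Fin (M + 1)) (x y : S) :
    (∑ ω' ∈ Finset.univ.filter (fun ω' : Fin (M + 1) → S × S => ω' t = (x, y)),
        (μ0 (ω' 0).1 * p (ω' 0).1 (ω' 0).2) *
          ∏ s : Fin M,
            (if (ω' s.succ).1 = (ω' s.castSucc).2
              then p (ω' s.castSucc).2 (ω' s.succ).2 else 0))
    = ∑ ω ∈ Finset.univ.filter
          (fun ω : Fin (M + 2) → S => ω t.castSucc = x ∧ ω t.succ = y),
        μ0 (ω 0) * ∏ s : Fin (M + 1), p (ω s.castSucc) (ω s.succ) :=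
  stateTransitionTransformation_marginal_eq_general M p μ0 t x y
end

section
/- (Fundamental-matrix solution of the Poisson equation.) Let S be a nonempty finite type, P : Matrix S S ℝ a row-stochastic matrix, ξ : S → ℝ a stationary distribution of P, Ξ : Matrix S S ℝ the matrix with Ξ x y = ξ y, r : S → ℝ, and ζ = Σ_{x∈S} ξ x · r x. If the matrix (1 − P + Ξ) is invertible, then the vector ĥ := (1 − P + Ξ)⁻¹ *ᵥ (r − ζ • 𝟏), where 𝟏 is the all-ones vector, solves the Poisson equation P *ᵥ ĥ = ĥ − r + ζ • 𝟏. -/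
open Matrix

/-- Fundamental-matrix solution of the Poisson equation: if `P` is row-stochastic with
stationary distribution `ξ`, `Ξ` is the rank-one matrix with every row equal to `ξ`,
`ζ = ∑ x, ξ x * r x` is the average reward, and `1 - P + Ξ` is invertible, then
`ĥ = (1 - P + Ξ)⁻¹ *ᵥ (r - ζ • 1)` solves the Poisson equation
`P *ᵥ ĥ = ĥ - r + ζ • 1`. -/
theorem fundamental_matrix_solves_poisson
    {S : Type} [Fintype S] [Nonempty S] [DecidableEq S]
    (P : Matrix S S ℝ)
    (hP0 : ∀ x y, 0 ≤ P x y) (hP1 : ∀ x, ∑ y, P x y = 1)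
    (ξ : S → ℝ) (hξ0 : ∀ x, 0 ≤ ξ x) (hξ1 : ∑ x, ξ x = 1)
    (hstat : ∀ y, ∑ x, ξ x * P x y = ξ y)
    (Ξ : Matrix S S ℝ) (hΞ : ∀ x y, Ξ x y = ξ y)
    (r : S → ℝ) (ζ : ℝ) (hζ : ζ = ∑ x, ξ x * r x)
    (hinv : IsUnit (1 - P + Ξ)) :
    P *ᵥ ((1 - P + Ξ)⁻¹ *ᵥ (r - ζ • (1 : S → ℝ)))
      = (1 - P + Ξ)⁻¹ *ᵥ (r - ζ • (1 : S → ℝ)) - r + ζ • (1 : S → ℝ) := by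
  set A := 1 - P + Ξ with hA
  set v := r - ζ • (1 : S → ℝ) with hv
  set h := A⁻¹ *ᵥ v with hh
  have hdet : IsUnit A.det := (Matrix.isUnit_iff_isUnit_det A).mp hinv
  have hAh : A *ᵥ h = v := by
    rw [hh, Matrix.mulVec_mulVec, Matrix.mul_nonsing_inv A hdet, Matrix.one_mulVec]
  -- ξ is a left fixed vector of A
  have hξA : ξ ᵥ* A = ξ := by
    funext y
    simp only [hA, Matrix.vecMul, dotProduct, Matrix.add_apply, Matrix.sub_apply,
      Matrix.one_apply, hΞ]
    have : ∑ x, ξ x * ((if x = y then (1:ℝ) else 0) - P x y + ξ y)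
        = (∑ x, ξ x * (if x = y then (1:ℝ) else 0)) - (∑ x, ξ x * P x y)
          + (∑ x, ξ x) * ξ y := by
      rw [Finset.sum_mul, ← Finset.sum_sub_distrib, ← Finset.sum_add_distrib]
      congr 1; funext x; ring
    rw [this, hstat, hξ1, one_mul]
    simp
  have hξAinv : ξ ᵥ* A⁻¹ = ξ := by
    have := congrArg (fun w => w ᵥ* A⁻¹) hξA
    simpa [Matrix.vecMul_vecMul, Matrix.mul_nonsing_inv A hdet] using this.symm
  have hξh : ξ ⬝ᵥ h = 0 := by
    rw [hh, Matrix.dotProduct_mulVec, hξAinv, hv]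
    simp only [dotProduct, Pi.sub_apply, Pi.smul_apply, Pi.one_apply, smul_eq_mul,
      mul_one, mul_sub]
    rw [Finset.sum_sub_distrib, ← Finset.sum_mul, hξ1, one_mul, hζ, sub_self]
  have hΞh : Ξ *ᵥ h = 0 := by
    funext x
    simp only [Matrix.mulVec, dotProduct, hΞ, Pi.zero_apply]
    simpa [dotProduct] using hξh
  have expand : A *ᵥ h = h - P *ᵥ h + Ξ *ᵥ h := by
    rw [hA, Matrix.add_mulVec, Matrix.sub_mulVec, Matrix.one_mulVec]
  rw [expand, hΞh, add_zero] at hAh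
  have hP : P *ᵥ h = h - v := by rw [← hAh]; abel
  rw [hP, hv]; abel
end

section
/- Let S be a nonempty finite type, P : Matrix S S ℝ a row-stochastic matrix, ξ : S → ℝ a stationary distribution of P, Ξ : Matrix S S ℝ the matrix with Ξ x y = ξ y, r : S → ℝ, and ζ = Σ_{x∈S} ξ x · r x. If (1 − P + Ξ) is invertible and ĥ := (1 − P + Ξ)⁻¹ *ᵥ (r − ζ • 𝟏), then ĥ has zero stationary mean: Σ_{x∈S} ξ x · ĥ x = 0. -/
open Matrix

/-- The fundamental-matrix solution of the Poisson equation has zero stationary mean: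
if `P` is row-stochastic with stationary distribution `ξ`, `Ξ` is the rank-one matrix
with every row equal to `ξ`, `ζ = ∑ x, ξ x * r x`, `1 - P + Ξ` is invertible, and
`ĥ = (1 - P + Ξ)⁻¹ *ᵥ (r - ζ • 1)`, then `∑ x, ξ x * ĥ x = 0`. -/
theorem fundamental_matrix_solution_zero_stationary_mean
    {S : Type} [Fintype S] [Nonempty S] [DecidableEq S]
    (P : Matrix S S ℝ)
    (hP0 : ∀ x y, 0 ≤ P x y) (hP1 : ∀ x, ∑ y, P x y = 1)
    (ξ : S → ℝ) (hξ0 : ∀ x, 0 ≤ ξ x) (hξ1 : ∑ x, ξ x = 1)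
    (hstat : ∀ y, ∑ x, ξ x * P x y = ξ y)
    (Ξ : Matrix S S ℝ) (hΞ : ∀ x y, Ξ x y = ξ y)
    (r : S → ℝ) (ζ : ℝ) (hζ : ζ = ∑ x, ξ x * r x)
    (hinv : IsUnit (1 - P + Ξ))
    (hhat : S → ℝ) (hdef : hhat = (1 - P + Ξ)⁻¹ *ᵥ (r - ζ • (1 : S → ℝ))) :
    ∑ x, ξ x * hhat x = 0 := by
  set A := 1 - P + Ξ with hA
  have hvA : ξ ᵥ* A = ξ := by
    funext y
    simp only [hA, vecMul, dotProduct, Matrix.add_apply, Matrix.sub_apply, Matrix.one_apply,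
      mul_add, mul_sub, Finset.sum_add_distrib, Finset.sum_sub_distrib, hΞ]
    rw [hstat y, ← Finset.sum_mul, hξ1]
    simp [Finset.mul_sum, mul_ite]
  have hvAi : ξ ᵥ* A⁻¹ = ξ := by
    calc ξ ᵥ* A⁻¹ = (ξ ᵥ* A) ᵥ* A⁻¹ := by rw [hvA]
    _ = ξ ᵥ* (A * A⁻¹) := by rw [vecMul_vecMul]
    _ = ξ := by rw [mul_nonsing_inv A ((isUnit_iff_isUnit_det A).mp hinv), vecMul_one]
  have key : ∑ x, ξ x * hhat x = ξ ⬝ᵥ hhat := rfl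
  rw [key, hdef, dotProduct_mulVec, hvAi]
  simp only [dotProduct, Pi.sub_apply, Pi.smul_apply, Pi.one_apply, smul_eq_mul, mul_one,
    mul_sub, Finset.sum_sub_distrib, ← hζ, ← Finset.sum_mul, hξ1, one_mul, sub_self]
end
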